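/- Let N : ℕ, let f : ℝ → ℂ be differentiable at 0 with f(0) = 1, and let λ : Fin N → ℂ be null with λ ≠ 0. Then P_f is Fréchet differentiable over ℝ at λ, and its derivative is the ℂ-linear map Π_⊥ : v ↦ v − (B(λ,v)/‖λ‖²) • λ̄. In particular, on the constraint surface the Jacobian is independent of f and its antiholomorphic block vanishes. (Toy-model form of Proposition 2, item 4, equations (Proj-matrix-onshell) and (proj-matrix-on-shell).) -/

import Mathlib

noncomputable section

open scoped BigOperators

namespace PureSpinorToy

variable {N : ℕ}

/-- Complex bilinear pairing `B(ρ,σ) = ∑ I, ρ_I σ_I`. -/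
def B (ρ σ : Fin N → ℂ) : ℂ := ∑ I, ρ I * σ I

/-- Hermitian inner product `⟪ρ,σ⟫ = ∑ I, conj(ρ_I) σ_I`. -/
def hInner (ρ σ : Fin N → ℂ) : ℂ := ∑ I, (starRingEnd ℂ) (ρ I) * σ I

/-- Norm square `‖ρ‖² = ⟪ρ,ρ⟫` (a nonnegative real). -/
def nsq (ρ : Fin N → ℂ) : ℝ := (hInner ρ ρ).re

/-- Componentwise complex conjugation `ρ̄`. -/
def conjFun (ρ : Fin N → ℂ) : Fin N → ℂ := fun I => (starRingEnd ℂ) (ρ I)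

/-- `ζ(ρ) = B(ρ,ρ)/‖ρ‖²`. -/
def zeta (ρ : Fin N → ℂ) : ℂ := B ρ ρ / (nsq ρ : ℂ)

/-- `ξ(ρ) = |ζ(ρ)|²`. -/
def xi (ρ : Fin N → ℂ) : ℝ := Complex.normSq (zeta ρ)

/-- The family of projection maps
`P_f(ρ) = f(ξ(ρ)) • (ρ − (ζ(ρ)/(1+√(1−ξ(ρ)))) • ρ̄)`. -/
def P (f : ℝ → ℂ) (ρ : Fin N → ℂ) : Fin N → ℂ :=
  f (xi ρ) • (ρ - (zeta ρ / (1 + (Real.sqrt (1 - xi ρ) : ℂ))) • conjFun ρ)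

/-- The special function `h(t) = (1+√(1−t))/(2√(1−t))`. -/
def h (t : ℝ) : ℂ := (((1 + Real.sqrt (1 - t)) / (2 * Real.sqrt (1 - t)) : ℝ) : ℂ)

/-- The potential `Φ(ρ) = (‖ρ‖²/2)(1+√(1−ξ(ρ)))`. -/
def Phi (ρ : Fin N → ℂ) : ℝ := (nsq ρ / 2) * (1 + Real.sqrt (1 - xi ρ))

end PureSpinorToy

/-!
At a null `λ` we have `ζ(λ) = 0`, so `ξ = |ζ|²` vanishes to second order there and every function
of `ξ` that is differentiable at `0` — `f ∘ ξ`, and `(1 + √(1 - ξ))⁻¹`, which equals `1/2` at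
`λ` — has zero derivative at `λ`. Likewise `B(λ,λ) = 0` kills the contribution of `‖ρ‖⁻²` to
`dζ`, leaving `dζ_λ = 2 B(λ,·)/‖λ‖²`. The product rule then gives
`dP_f(λ) v = v - ½ dζ_λ(v) λ̄`, because every other term carries a factor `ζ(λ)` or a
vanishing derivative.
-/

theorem HasFDerivAt.smul_of_eq_zero {𝕜 E F 𝕜' : Type*} [NontriviallyNormedField 𝕜]
    [NormedAddCommGroup E] [NormedSpace 𝕜 E] [NormedAddCommGroup F] [NormedSpace 𝕜 F]
    [NormedRing 𝕜'] [NormedAlgebra 𝕜 𝕜'] [Module 𝕜' F] [IsBoundedSMul 𝕜' F]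
    [IsScalarTower 𝕜 𝕜' F] {c : E → 𝕜'} {c' : E →L[𝕜] 𝕜'} {f : E → F} {x : E}
    (hc : HasFDerivAt c c' x) (hc0 : c x = 0) (hf : DifferentiableAt 𝕜 f x) :
    HasFDerivAt (fun y => c y • f y) (c'.smulRight (f x)) x := by
  simpa [hc0] using hc.fun_smul hf.hasFDerivAt

theorem Complex.hasFDerivAt_normSq_zero : HasFDerivAt Complex.normSq (0 : ℂ →L[ℝ] ℝ) 0 := by
  rw [show (Complex.normSq : ℂ → ℝ) = fun z => ‖z‖ ^ 2 from funext Complex.normSq_eq_norm_sq]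
  simpa using (hasStrictFDerivAt_norm_sq (0 : ℂ)).hasFDerivAt

namespace PureSpinorToy

variable {N : ℕ}

def pairingCLM (lam : Fin N → ℂ) : (Fin N → ℂ) →L[ℝ] ℂ :=
  ∑ I, lam I • ContinuousLinearMap.proj I

@[simp]
theorem pairingCLM_apply (lam v : Fin N → ℂ) : pairingCLM lam v = B lam v := by
  simp [pairingCLM, B]

theorem hasFDerivAt_B_self (lam : Fin N → ℂ) :
    HasFDerivAt (fun ρ : Fin N → ℂ => B ρ ρ) ((2 : ℂ) • pairingCLM lam) lam := by
  have h := HasFDerivAt.fun_sum (u := Finset.univ) fun I _ =>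
    (ContinuousLinearMap.proj (R := ℝ) (φ := fun _ : Fin N => ℂ) I).hasFDerivAt.fun_mul
      (ContinuousLinearMap.proj (R := ℝ) (φ := fun _ : Fin N => ℂ) I).hasFDerivAt (x := lam)
  refine h.congr_fderiv ?_
  ext v
  simp [B, two_mul, Finset.sum_add_distrib]

theorem nsq_eq_sum_normSq (ρ : Fin N → ℂ) : nsq ρ = ∑ I, Complex.normSq (ρ I) := by
  simp only [nsq, hInner, Complex.re_sum, ← Complex.normSq_eq_conj_mul_self, Complex.ofReal_re]

theorem nsq_pos {lam : Fin N → ℂ} (hlam : lam ≠ 0) : 0 < nsq lam := by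
  obtain ⟨I, hI⟩ := Function.ne_iff.mp hlam
  rw [nsq_eq_sum_normSq]
  exact Finset.sum_pos' (fun J _ => Complex.normSq_nonneg _)
    ⟨I, Finset.mem_univ I, Complex.normSq_pos.mpr hI⟩

theorem differentiable_nsq : Differentiable ℝ (nsq : (Fin N → ℂ) → ℝ) := by
  unfold nsq hInner
  fun_prop

theorem differentiable_conjFun : Differentiable ℝ (conjFun : (Fin N → ℂ) → Fin N → ℂ) := by
  unfold conjFun
  fun_prop

theorem zeta_eq_zero {lam : Fin N → ℂ} (hnull : B lam lam = 0) : zeta lam = 0 := by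
  simp [zeta, hnull]

theorem xi_eq_zero {lam : Fin N → ℂ} (hnull : B lam lam = 0) : xi lam = 0 := by
  simp [xi, zeta_eq_zero hnull]

theorem hasFDerivAt_zeta {lam : Fin N → ℂ} (hnull : B lam lam = 0) (hlam : lam ≠ 0) :
    HasFDerivAt zeta ((2 / nsq lam : ℂ) • pairingCLM lam) lam := by
  have hinv : DifferentiableAt ℝ (fun ρ : Fin N → ℂ => (nsq ρ : ℂ)⁻¹) lam := by
    have hne : (nsq lam : ℂ) ≠ 0 := by exact_mod_cast (nsq_pos hlam).ne'
    have := differentiable_nsq (N := N)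
    fun_prop (disch := exact hne)
  have h := (hasFDerivAt_B_self lam).smul_of_eq_zero hnull hinv
  refine (h.congr_fderiv ?_).congr_of_eventuallyEq (Filter.Eventually.of_forall fun ρ => ?_)
  · ext v
    simp only [ContinuousLinearMap.smulRight_apply, smul_apply,
      pairingCLM_apply, smul_eq_mul, div_eq_mul_inv]
    ring
  · simp [zeta, div_eq_mul_inv]

theorem hasFDerivAt_xi {lam : Fin N → ℂ} (hnull : B lam lam = 0) (hlam : lam ≠ 0) :
    HasFDerivAt xi (0 : (Fin N → ℂ) →L[ℝ] ℝ) lam :=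
  ((zeta_eq_zero hnull ▸ Complex.hasFDerivAt_normSq_zero).comp lam
    (hasFDerivAt_zeta hnull hlam)).congr_fderiv (by simp)

theorem hasFDerivAt_comp_xi {φ : ℝ → ℂ} (hφ : DifferentiableAt ℝ φ 0) {lam : Fin N → ℂ}
    (hnull : B lam lam = 0) (hlam : lam ≠ 0) :
    HasFDerivAt (fun ρ => φ (xi ρ)) (0 : (Fin N → ℂ) →L[ℝ] ℂ) lam :=
  ((xi_eq_zero hnull ▸ hφ.hasFDerivAt).comp lam (hasFDerivAt_xi hnull hlam)).congr_fderiv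
    (by simp)

theorem hasFDerivAt_zeta_div {lam : Fin N → ℂ} (hnull : B lam lam = 0) (hlam : lam ≠ 0) :
    HasFDerivAt (fun ρ => zeta ρ / (1 + (Real.sqrt (1 - xi ρ) : ℂ)))
      ((nsq lam : ℂ)⁻¹ • pairingCLM lam) lam := by
  have hφ : DifferentiableAt ℝ (fun t : ℝ => (1 + (Real.sqrt (1 - t) : ℂ))⁻¹) 0 := by
    fun_prop (disch := norm_num)
  have h := (hasFDerivAt_zeta hnull hlam).smul_of_eq_zero (zeta_eq_zero hnull)
    (hasFDerivAt_comp_xi hφ hnull hlam).differentiableAt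
  refine h.congr_fderiv ?_
  ext v
  simp only [div_eq_mul_inv, xi_eq_zero hnull, sub_zero, Real.sqrt_one, Complex.ofReal_one,
    ContinuousLinearMap.smulRight_apply, smul_apply, pairingCLM_apply,
    smul_eq_mul]
  ring

/-- Toy model, Proposition 2 item 4 (Proj-matrix-onshell)/(proj-matrix-on-shell):
on the constraint surface the Jacobian of `P_f` is the ℂ-linear map
`Π_⊥ : v ↦ v − (B(λ,v)/‖λ‖²) • λ̄`, independently of `f`. -/
theorem statement11 {N : ℕ} (f : ℝ → ℂ) (hf0 : f 0 = 1) (hfd : DifferentiableAt ℝ f 0)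
    (lam : Fin N → ℂ) (hnull : B lam lam = 0) (hlam : lam ≠ 0) :
    ∃ L : (Fin N → ℂ) →L[ℝ] (Fin N → ℂ), HasFDerivAt (P f) L lam ∧
      ∀ v, L v = v - (B lam v / (nsq lam : ℂ)) • conjFun lam := by
  have hcoeff := (hasFDerivAt_zeta_div hnull hlam).smul_of_eq_zero
    (by simp [zeta_eq_zero hnull]) (differentiable_conjFun lam)
  have hP := (hasFDerivAt_comp_xi hfd hnull hlam).fun_smul ((hasFDerivAt_id lam).sub hcoeff)
  refine ⟨_, hP, fun v => ?_⟩
  simp [xi_eq_zero hnull, hf0, div_eq_inv_mul]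

end PureSpinorToy
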